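/- Let G be a finite group, p a prime, φ : Γ → G a homomorphism from a group Γ, and suppose g ∈ G has p-power order and g^{-1} φ(γ) g = φ(σ(γ)) for all γ ∈ Γ, where σ is a fixed automorphism of Γ. Then the set of x ∈ G satisfying the same two conditions (p-power order and x^{-1} φ(γ) x = φ(σ(γ)) for all γ) is exactly {x ∈ C g : |x| is a power of p}, where C is the centralizer of the image of φ in G; in particular its cardinality is divisible by the p-part of |C|. -/

import Mathlib

/-!
An element `x` satisfies `x⁻¹ φ(γ) x = φ(σ γ)` for all `γ` exactly when `x g⁻¹` centralizes the
image of `φ`, i.e. when `x ∈ C g`; moreover `g` normalizes `C`. So the count is an instance of the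
coset lemma for a subgroup `H` and a `p`-element `g` normalizing it.

For the coset lemma let `X` be the set of `p`-elements of `H g`. Every `k ∈ H g` factors uniquely
as `k = x y` with `x ∈ X` and `y` a `p'`-element of `H` commuting with `x`, so
`|H| = ∑ |X ∩ C(y)|` over the `p'`-elements `y` of `H`. When `y` centralizes `⟨H, g⟩` the term is
`|X|`, and these `y` form an abelian `p'`-group `Z`. The remaining terms are permuted by
`H`-conjugation with orbits of size `|H : C_H(y)|`, and `X ∩ C(y)` is the set of `p`-elements of
the coset `C_H(y) c` for any `c` in it; by induction on `|⟨H, g⟩|` its size is divisible by the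
`p`-part of `|C_H(y)|`. Hence the `p`-part of `|H|` divides `|Z| |X|`, and `p ∤ |Z|`.
-/

open Subgroup Finset

section PrimePart

variable {G : Type*} [Group G] (p : ℕ)

/-- Writing `n = p ^ a * m` with `p ∤ m`, this is `≡ 0 [MOD p ^ a]` and `≡ 1 [MOD m]`. -/
def pCompExponent (n : ℕ) : ℕ := ordProj[p] n ^ Nat.totient (ordCompl[p] n)

/-- `pPart p x` and `pCompPart p x` are the commuting `p`- and `p'`-parts of `x`, both powers of
`x`. -/
noncomputable def pCompPart (x : G) : G := x ^ pCompExponent p (orderOf x)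

noncomputable def pPart (x : G) : G := x * (pCompPart p x)⁻¹

variable {p}

lemma ordProj_dvd_pCompExponent {n : ℕ} (hn : n ≠ 0) : ordProj[p] n ∣ pCompExponent p n :=
  dvd_pow_self _ (Nat.totient_pos.2 (Nat.ordCompl_pos p hn)).ne'

lemma pCompExponent_modEq_one (hp : p.Prime) {n : ℕ} (hn : n ≠ 0) :
    pCompExponent p n ≡ 1 [MOD ordCompl[p] n] :=
  Nat.ModEq.pow_totient ((Nat.coprime_ordCompl hp hn).pow_left _)

lemma pPart_mul_pCompPart (x : G) : pPart p x * pCompPart p x = x :=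
  inv_mul_cancel_right _ _

lemma commute_pPart_pCompPart (x : G) : Commute (pPart p x) (pCompPart p x) :=
  (Commute.self_pow x _).mul_left (Commute.refl _).inv_left

lemma orderOf_pCompPart_dvd {x : G} (hx : IsOfFinOrder x) :
    orderOf (pCompPart p x) ∣ ordCompl[p] (orderOf x) := by
  rw [orderOf_dvd_iff_pow_eq_one, pCompPart, ← pow_mul, ← orderOf_dvd_iff_pow_eq_one]
  conv_lhs => rw [← Nat.ordProj_mul_ordCompl_eq_self (orderOf x) p]
  exact mul_dvd_mul_right (ordProj_dvd_pCompExponent hx.orderOf_pos.ne') _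

lemma coprime_orderOf_pCompPart (hp : p.Prime) {x : G} (hx : IsOfFinOrder x) :
    p.Coprime (orderOf (pCompPart p x)) :=
  (Nat.coprime_ordCompl hp hx.orderOf_pos.ne').coprime_dvd_right (orderOf_pCompPart_dvd hx)

lemma orderOf_pPart_dvd (hp : p.Prime) {x : G} (hx : IsOfFinOrder x) :
    orderOf (pPart p x) ∣ ordProj[p] (orderOf x) := by
  have hn := hx.orderOf_pos.ne'
  rw [orderOf_dvd_iff_pow_eq_one, pPart, pCompPart, (Commute.self_pow x _).inv_right.mul_pow,
    inv_pow, ← pow_mul, mul_inv_eq_one, pow_eq_pow_iff_modEq]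
  have h := (pCompExponent_modEq_one hp hn).mul_right' (ordProj[p] (orderOf x))
  rw [one_mul, mul_comm (ordCompl[p] _), Nat.ordProj_mul_ordCompl_eq_self] at h
  exact h.symm

lemma exists_orderOf_pPart_eq_pow (hp : p.Prime) {x : G} (hx : IsOfFinOrder x) :
    ∃ k, orderOf (pPart p x) = p ^ k := by
  obtain ⟨k, -, hk⟩ := (Nat.dvd_prime_pow hp).1 (orderOf_pPart_dvd hp hx)
  exact ⟨k, hk⟩

lemma pCompPart_mem_of_pow_mem (hp : p.Prime) {x : G} (hx : IsOfFinOrder x) {H : Subgroup G}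
    {j : ℕ} (h : x ^ p ^ j ∈ H) : pCompPart p x ∈ H := by
  have hcop : (p ^ j).gcd (orderOf (pCompPart p x)) = 1 :=
    ((coprime_orderOf_pCompPart hp hx).pow_left j)
  refine zpowers_le.2 ?_ (mem_zpowers_pow_iff.2 hcop)
  rw [pCompPart, ← pow_mul, mul_comm, pow_mul]
  exact pow_mem h _

lemma pCompPart_mul_of_commute (hp : p.Prime) {a b : G} (hab : Commute a b)
    (ha : ∃ k, orderOf a = p ^ k) (hb : IsOfFinOrder b) (hpb : p.Coprime (orderOf b)) :
    pCompPart p (a * b) = b := by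
  obtain ⟨j, hj⟩ := ha
  have hn : orderOf (a * b) = p ^ j * orderOf b := by
    rw [← hj]
    exact hab.orderOf_mul_eq_mul_orderOf_of_coprime (hj ▸ hpb.pow_left j)
  have hn0 : orderOf (a * b) ≠ 0 := hn ▸ mul_ne_zero (pow_ne_zero _ hp.ne_zero) hb.orderOf_pos.ne'
  have hdvd : orderOf a ∣ pCompExponent p (orderOf (a * b)) := by
    refine Dvd.dvd.trans ?_ (ordProj_dvd_pCompExponent hn0)
    rw [hj, ← Nat.ordProj_self_pow hp (k := j)]
    exact Nat.ordProj_dvd_ordProj_of_dvd hn0 (hn ▸ dvd_mul_right _ _) p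
  have hmod := pCompExponent_modEq_one hp hn0
  rw [hn, Nat.ordCompl_pow_mul_of_not_dvd _ hp (hp.coprime_iff_not_dvd.1 hpb), ← hn] at hmod
  rw [pCompPart, hab.mul_pow, orderOf_dvd_iff_pow_eq_one.1 hdvd, one_mul,
    pow_eq_pow_iff_modEq.2 hmod, pow_one]

lemma pPart_mul_of_commute (hp : p.Prime) {a b : G} (hab : Commute a b)
    (ha : ∃ k, orderOf a = p ^ k) (hb : IsOfFinOrder b) (hpb : p.Coprime (orderOf b)) :
    pPart p (a * b) = a := by
  rw [pPart, pCompPart_mul_of_commute hp hab ha hb hpb, mul_inv_cancel_right]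

end PrimePart

section Normalizer

variable {G ι : Type*} [Group G] {a b : ι → G} {g : G} {H : Subgroup G}

lemma forall_conj_eq_iff_mul_inv_mem_centralizer (hg : ∀ i, g⁻¹ * a i * g = b i) (x : G) :
    (∀ i, x⁻¹ * a i * x = b i) ↔ x * g⁻¹ ∈ centralizer (Set.range a) := by
  rw [mem_centralizer_iff, Set.forall_mem_range]
  refine forall_congr' fun i => ?_
  rw [← hg i]
  constructor <;> intro h
  · calc a i * (x * g⁻¹) = x * (x⁻¹ * a i * x) * g⁻¹ := by group
      _ = x * g⁻¹ * a i := by rw [h]; group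
  · calc x⁻¹ * a i * x = g⁻¹ * ((x * g⁻¹)⁻¹ * (a i * (x * g⁻¹))) * g := by group
      _ = g⁻¹ * a i * g := by rw [h]; group

lemma mem_normalizer_range {σ : ι → ι} (hσ : Function.Surjective σ)
    (hg : ∀ i, g⁻¹ * a i * g = a (σ i)) : g ∈ normalizer (Set.range a) := by
  refine mem_set_normalizer_iff''.2 fun h => ⟨?_, ?_⟩
  · rintro ⟨i, rfl⟩
    exact ⟨σ i, (hg i).symm⟩
  · rintro ⟨j, hj⟩
    obtain ⟨i, rfl⟩ := hσ j
    exact ⟨i, by simpa using (hg i).trans hj⟩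

lemma pow_mul_inv_pow_mem (hg : g ∈ normalizer H) {x : G} (hx : x * g⁻¹ ∈ H) (n : ℕ) :
    x ^ n * (g ^ n)⁻¹ ∈ H := by
  induction n with
  | zero => simp
  | succ n ih =>
    have hconj := (mem_normalizer_iff.1 (pow_mem hg n) _).1 hx
    rw [show x ^ (n + 1) * (g ^ (n + 1))⁻¹ = x ^ n * (g ^ n)⁻¹ * (g ^ n * (x * g⁻¹) * (g ^ n)⁻¹)
      by group]
    exact mul_mem ih hconj

lemma mem_sup_zpowers_of_mul_inv_mem {x : G} (hx : x * g⁻¹ ∈ H) : x ∈ H ⊔ zpowers g := by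
  simpa using mul_mem (mem_sup_left hx) (mem_sup_right (mem_zpowers g) : g ∈ H ⊔ zpowers g)

lemma conj_mem_centralizer_iff {K : Subgroup G} {h : G} (hh : h ∈ K) (y : G) :
    h * y * h⁻¹ ∈ centralizer (K : Set G) ↔ y ∈ centralizer (K : Set G) :=
  ((mem_normalizer_iff.1 (le_normalizer_of_normal_subgroupOf (centralizer_le_normalizer _)
    (le_normalizer hh))) y).symm

lemma mem_normalizer_inf_centralizer (hg : g ∈ normalizer H) {y c : G} (hc : c * g⁻¹ ∈ H)
    (hcy : c ∈ centralizer {y}) : c ∈ normalizer (H ⊓ centralizer {y} : Subgroup G) := by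
  refine inf_normalizer_le_normalizer_inf ⟨?_, le_normalizer hcy⟩
  simpa using mul_mem (le_normalizer hc) hg

end Normalizer

lemma dvd_sum_of_dvd_index_stabilizer_mul {M α : Type*} [Group M] [MulAction M α] [Fintype α]
    {f : α → ℕ} (hf : ∀ (m : M) a, f (m • a) = f a) {n : ℕ}
    (hn : ∀ a, n ∣ (MulAction.stabilizer M a).index * f a) : n ∣ ∑ a, f a := by
  classical
  rw [← Fintype.sum_equiv (MulAction.selfEquivSigmaOrbits M α).symm (fun s => f s.2) _
    fun _ => rfl, Fintype.sum_sigma]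
  refine dvd_sum fun ω _ => ?_
  have hconst : ∀ b : MulAction.orbit M ω.out, f b = f ω.out := by
    rintro ⟨_, m, rfl⟩
    exact hf m _
  rw [sum_congr rfl fun b _ => hconst b, sum_const, card_univ, smul_eq_mul,
    ← Nat.card_eq_fintype_card, Nat.card_coe_set_eq, ← MulAction.index_stabilizer]
  exact hn _

lemma dvd_sum_of_dvd_relIndex_centralizer_mul {G : Type*} [Group G] [Fintype G] (H : Subgroup G)
    {f : G → ℕ} (hf : ∀ h ∈ H, ∀ y, f (h * y * h⁻¹) = f y) {n : ℕ}
    (hn : ∀ y, n ∣ (centralizer {y}).relIndex H * f y) : n ∣ ∑ y, f y := by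
  let _ : MulAction H G :=
    MulAction.compHom G ((ConjAct.toConjAct : G ≃* ConjAct G).toMonoidHom.comp H.subtype)
  refine dvd_sum_of_dvd_index_stabilizer_mul (M := H) (fun h y => hf h h.2 y) fun y => ?_
  have hstab : MulAction.stabilizer H y = (centralizer {y}).subgroupOf H := by
    ext h
    rw [MulAction.mem_stabilizer_iff, mem_subgroupOf, mem_centralizer_singleton_iff]
    change (h : G) * y * (h : G)⁻¹ = y ↔ _
    rw [mul_inv_eq_iff_eq_mul, eq_comm]
  rw [hstab]
  exact hn y

section CosetCount

open scoped Classical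

variable {G : Type*} [Group G] [Fintype G] {p : ℕ}

noncomputable def pElementsOfCoset (p : ℕ) (H : Subgroup G) (g : G) : Finset G :=
  {x | x * g⁻¹ ∈ H ∧ ∃ k, orderOf x = p ^ k}

variable {H : Subgroup G} {g : G}

@[simp]
lemma mem_pElementsOfCoset {x : G} :
    x ∈ pElementsOfCoset p H g ↔ x * g⁻¹ ∈ H ∧ ∃ k, orderOf x = p ^ k := by
  simp [pElementsOfCoset]

lemma conj_mem_pElementsOfCoset (hg : g ∈ normalizer H) {h x : G} (hh : h ∈ H)
    (hx : x ∈ pElementsOfCoset p H g) : h * x * h⁻¹ ∈ pElementsOfCoset p H g := by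
  obtain ⟨hxg, k, hk⟩ := mem_pElementsOfCoset.1 hx
  refine mem_pElementsOfCoset.2 ⟨?_, k, ?_⟩
  · rw [show h * x * h⁻¹ * g⁻¹ = h * (x * g⁻¹) * (g * h⁻¹ * g⁻¹) by group]
    exact mul_mem (mul_mem hh hxg) ((mem_normalizer_iff.1 hg _).1 (inv_mem hh))
  · rw [← hk, ← MulEquiv.orderOf_eq (MulAut.conj h) x, MulAut.conj_apply]

lemma card_eq_sum_card_pElementsOfCoset_centralizer (hp : p.Prime) (hgH : g ∈ normalizer H)
    (hg : ∃ k, orderOf g = p ^ k) :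
    Nat.card H = ∑ y ∈ {y | y ∈ H ∧ p.Coprime (orderOf y)},
      #{x ∈ pElementsOfCoset p H g | x ∈ centralizer {y}} := by
  have hcoset : Nat.card H = #{x | x * g⁻¹ ∈ H} := by
    rw [← Fintype.card_subtype, ← Nat.card_eq_fintype_card]
    exact Nat.card_congr ((Equiv.mulRight g).subtypeEquiv fun x => by simp)
  rw [hcoset, ← card_sigma]
  refine card_nbij' (fun x => ⟨pCompPart p x, pPart p x⟩) (fun s => s.2 * s.1) ?_ ?_ ?_ ?_
  · intro x hx
    simp only [coe_filter, mem_univ, true_and, Set.mem_ofPred_eq] at hx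
    obtain ⟨m, hm⟩ := hg
    have hxfin := isOfFinOrder_of_finite x
    have hpow : x ^ p ^ m ∈ H := by
      simpa [← hm, pow_orderOf_eq_one] using pow_mul_inv_pow_mem hgH hx (p ^ m)
    have hy := pCompPart_mem_of_pow_mem hp hxfin hpow
    simp only [coe_sigma, Set.mem_sigma_iff, coe_filter, mem_univ, true_and, Set.mem_ofPred_eq,
      mem_pElementsOfCoset, mem_centralizer_singleton_iff]
    refine ⟨⟨hy, coprime_orderOf_pCompPart hp hxfin⟩, ⟨?_, exists_orderOf_pPart_eq_pow hp hxfin⟩,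
      (commute_pPart_pCompPart x).eq⟩
    rw [show pPart p x * g⁻¹ = x * g⁻¹ * (g * (pCompPart p x)⁻¹ * g⁻¹) by rw [pPart]; group]
    exact mul_mem hx ((mem_normalizer_iff.1 hgH _).1 (inv_mem hy))
  · rintro ⟨y, x⟩ hs
    simp only [coe_sigma, Set.mem_sigma_iff, coe_filter, mem_univ, true_and, Set.mem_ofPred_eq,
      mem_pElementsOfCoset] at hs ⊢
    obtain ⟨⟨hyH, -⟩, ⟨hxg, -⟩, -⟩ := hs
    rw [show x * y * g⁻¹ = x * g⁻¹ * (g * y * g⁻¹) by group]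
    exact mul_mem hxg ((mem_normalizer_iff.1 hgH _).1 hyH)
  · intro x _
    exact pPart_mul_pCompPart x
  · rintro ⟨y, x⟩ hs
    simp only [coe_sigma, Set.mem_sigma_iff, coe_filter, mem_univ, true_and, Set.mem_ofPred_eq,
      mem_pElementsOfCoset, mem_centralizer_singleton_iff] at hs
    obtain ⟨⟨-, hyp⟩, ⟨-, hxp⟩, hxy⟩ := hs
    have hyfin := isOfFinOrder_of_finite y
    simp only [pCompPart_mul_of_commute hp hxy hxp hyfin hyp,
      pPart_mul_of_commute hp hxy hxp hyfin hyp]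

lemma filter_mem_centralizer_pElementsOfCoset_eq_self {y : G}
    (hy : y ∈ centralizer (H ⊔ zpowers g : Subgroup G)) :
    {x ∈ pElementsOfCoset p H g | x ∈ centralizer {y}} = pElementsOfCoset p H g := by
  refine filter_true_of_mem fun x hx => mem_centralizer_singleton_iff.2 ?_
  exact mem_centralizer_iff.1 hy x (mem_sup_zpowers_of_mul_inv_mem (mem_pElementsOfCoset.1 hx).1)

lemma filter_mem_centralizer_pElementsOfCoset_eq {y c : G} (hc : c * g⁻¹ ∈ H)
    (hcy : c ∈ centralizer {y}) :
    {x ∈ pElementsOfCoset p H g | x ∈ centralizer {y}} =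
      pElementsOfCoset p (H ⊓ centralizer {y}) c := by
  ext x
  have hH : x * c⁻¹ ∈ H ↔ x * g⁻¹ ∈ H := by
    rw [show x * c⁻¹ = x * g⁻¹ * (c * g⁻¹)⁻¹ by group]
    exact mul_mem_cancel_right (inv_mem hc)
  have hC : x * c⁻¹ ∈ centralizer {y} ↔ x ∈ centralizer {y} := mul_mem_cancel_right (inv_mem hcy)
  simp only [mem_filter, mem_pElementsOfCoset, Subgroup.mem_inf, hH, hC]
  tauto

lemma card_filter_mem_centralizer_conj (hg : g ∈ normalizer H) {h : G} (hh : h ∈ H) (y : G) :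
    #{x ∈ pElementsOfCoset p H g | x ∈ centralizer {h * y * h⁻¹}} =
      #{x ∈ pElementsOfCoset p H g | x ∈ centralizer {y}} := by
  have hconj : ∀ (k : G) {a b : G}, Commute a b → Commute (k * a * k⁻¹) (k * b * k⁻¹) :=
    fun k _ _ hab => by simpa using hab.map (MulAut.conj k)
  refine card_nbij' (fun x => h⁻¹ * x * h) (fun x => h * x * h⁻¹) ?_ ?_ ?_ ?_
  · intro x hx
    simp only [coe_filter, mem_centralizer_singleton_iff, Set.mem_ofPred_eq] at hx ⊢
    refine ⟨by simpa using conj_mem_pElementsOfCoset hg (inv_mem hh) hx.1, ?_⟩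
    simpa [mul_assoc] using (hconj h⁻¹ hx.2).eq
  · intro x hx
    simp only [coe_filter, mem_centralizer_singleton_iff, Set.mem_ofPred_eq] at hx ⊢
    exact ⟨conj_mem_pElementsOfCoset hg hh hx.1, (hconj h hx.2).eq⟩
  · intro x _
    simp [mul_assoc]
  · intro x _
    simp [mul_assoc]

lemma not_dvd_card_filter_coprime_orderOf (hp : p.Prime) {A : Subgroup G}
    (hA : ∀ a ∈ A, ∀ b ∈ A, Commute a b) : ¬ p ∣ #{a | a ∈ A ∧ p.Coprime (orderOf a)} := by
  let B : Subgroup G :=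
    { carrier := {a | a ∈ A ∧ p.Coprime (orderOf a)}
      one_mem' := ⟨one_mem A, by simp⟩
      mul_mem' := fun {a b} ha hb => ⟨mul_mem ha.1 hb.1,
        Nat.Coprime.coprime_dvd_right (hA a ha.1 b hb.1).orderOf_mul_dvd_mul_orderOf
          (ha.2.mul_right hb.2)⟩
      inv_mem' := fun {a} ha => ⟨inv_mem ha.1, by rw [orderOf_inv]; exact ha.2⟩ }
  intro hdvd
  have : Fact p.Prime := ⟨hp⟩
  obtain ⟨u, hu⟩ := exists_prime_orderOf_dvd_card' (G := B) p (by
    rw [Nat.card_eq_fintype_card, Fintype.card_subtype]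
    convert hdvd using 2
    ext a
    simp only [mem_filter]
    rfl)
  have hcop : p.Coprime (orderOf (u : G)) := u.2.2
  rw [orderOf_coe, hu, Nat.coprime_self] at hcop
  exact hp.one_lt.ne' hcop

lemma pow_padicValNat_card_dvd_relIndex_mul (hp : p.Prime) (K : Subgroup G) {m : ℕ}
    (hm : p ^ padicValNat p (Nat.card (H ⊓ K : Subgroup G)) ∣ m) :
    p ^ padicValNat p (Nat.card H) ∣ K.relIndex H * m := by
  have : Fact p.Prime := ⟨hp⟩
  have hcard : Nat.card H = K.relIndex H * Nat.card (H ⊓ K : Subgroup G) := by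
    have := relIndex_mul_relIndex ⊥ (H ⊓ K) H bot_le inf_le_left
    rw [relIndex_bot_left, relIndex_bot_left, inf_relIndex_left, mul_comm] at this
    exact this.symm
  have hK : K.relIndex H ≠ 0 := left_ne_zero_of_mul (hcard ▸ Nat.card_pos.ne')
  rw [hcard, padicValNat.mul hK Nat.card_pos.ne', pow_add]
  exact mul_dvd_mul pow_padicValNat_dvd hm

lemma card_sup_zpowers_lt {y c : G} (hy : y ∉ centralizer (H ⊔ zpowers g : Subgroup G))
    (hc : c * g⁻¹ ∈ H) (hcy : c ∈ centralizer {y}) :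
    Nat.card ((H ⊓ centralizer {y}) ⊔ zpowers c : Subgroup G) <
      Nat.card (H ⊔ zpowers g : Subgroup G) := by
  set K := H ⊔ zpowers g
  have hcK : c ∈ K := mem_sup_zpowers_of_mul_inv_mem hc
  have hle : (H ⊓ centralizer {y}) ⊔ zpowers c ≤ K ⊓ centralizer {y} :=
    sup_le (inf_le_inf_right _ le_sup_left) (zpowers_le.2 ⟨hcK, hcy⟩)
  have hlt : K ⊓ centralizer {y} < K := inf_lt_left.2 fun hK => hy <|
    mem_centralizer_iff.2 fun k hk => mem_centralizer_singleton_iff.1 (hK hk)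
  refine (card_le_of_le hle).trans_lt ?_
  exact (card_le_of_le hlt.le).lt_of_ne fun h => hlt.ne (eq_of_le_of_card_ge hlt.le h.ge)

lemma pow_padicValNat_card_dvd_sum_noncentral (hp : p.Prime) (hgH : g ∈ normalizer H)
    (ih : ∀ (H' : Subgroup G) (c : G), c ∈ normalizer H' → (∃ k, orderOf c = p ^ k) →
      Nat.card (H' ⊔ zpowers c : Subgroup G) < Nat.card (H ⊔ zpowers g : Subgroup G) →
        p ^ padicValNat p (Nat.card H') ∣ #(pElementsOfCoset p H' c)) :
    p ^ padicValNat p (Nat.card H) ∣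
      ∑ y ∈ {y | (y ∈ H ∧ p.Coprime (orderOf y)) ∧ y ∉ centralizer (H ⊔ zpowers g : Subgroup G)},
        #{x ∈ pElementsOfCoset p H g | x ∈ centralizer {y}} := by
  rw [sum_filter]
  refine dvd_sum_of_dvd_relIndex_centralizer_mul H (fun h hh y => ?_) fun y => ?_
  · have hH : h * y * h⁻¹ ∈ H ↔ y ∈ H := ((mem_normalizer_iff.1 (le_normalizer hh)) y).symm
    have hO : orderOf (h * y * h⁻¹) = orderOf y := by
      simpa using MulEquiv.orderOf_eq (MulAut.conj h) y
    simp only [hH, hO, conj_mem_centralizer_iff (mem_sup_left hh),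
      card_filter_mem_centralizer_conj hgH hh y]
  split_ifs with hy
  · obtain hS | ⟨c, hc⟩ := {x ∈ pElementsOfCoset p H g | x ∈ centralizer {y}}.eq_empty_or_nonempty
    · simp [hS]
    obtain ⟨hcX, hcy⟩ := mem_filter.1 hc
    obtain ⟨hcg, hcp⟩ := mem_pElementsOfCoset.1 hcX
    refine pow_padicValNat_card_dvd_relIndex_mul hp _ ?_
    rw [filter_mem_centralizer_pElementsOfCoset_eq hcg hcy]
    exact ih _ _ (mem_normalizer_inf_centralizer hgH hcg hcy) hcp (card_sup_zpowers_lt hy.2 hcg hcy)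
  · simp

theorem pow_padicValNat_card_dvd_card_pElementsOfCoset (hp : p.Prime) (H : Subgroup G) (g : G)
    (hgH : g ∈ normalizer H) (hg : ∃ k, orderOf g = p ^ k) :
    p ^ padicValNat p (Nat.card H) ∣ #(pElementsOfCoset p H g) := by
  induction hn : Nat.card (H ⊔ zpowers g : Subgroup G) using Nat.strong_induction_on
    generalizing H g with
  | _ n ih =>
  set K : Subgroup G := H ⊔ zpowers g
  have hsum := card_eq_sum_card_pElementsOfCoset_centralizer hp hgH hg
  rw [← sum_filter_add_sum_filter_not _ (· ∈ centralizer (K : Set G)),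
    sum_congr rfl fun y hy =>
      by rw [filter_mem_centralizer_pElementsOfCoset_eq_self (mem_filter.1 hy).2],
    sum_const, smul_eq_mul, filter_filter, filter_filter] at hsum
  have hnoncentral := pow_padicValNat_card_dvd_sum_noncentral hp hgH
    fun H' c hc hcp hlt => ih _ (hn ▸ hlt) H' c hc hcp rfl
  have hdvd : p ^ padicValNat p (Nat.card H) ∣ Nat.card H := pow_padicValNat_dvd
  conv_rhs at hdvd => rw [hsum]
  refine (Nat.Coprime.pow_left _ (hp.coprime_iff_not_dvd.2 ?_)).dvd_of_dvd_mul_left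
    ((Nat.dvd_add_left hnoncentral).1 hdvd)
  convert not_dvd_card_filter_coprime_orderOf hp (A := H ⊓ centralizer (K : Set G))
    fun a ha b hb => (mem_centralizer_iff.1 ha.2 b (mem_sup_left hb.1)).symm using 3
  ext y
  simp only [mem_filter, mem_univ, true_and, Subgroup.mem_inf]
  tauto

end CosetCount

/-- Let `G` be a finite group, `p` a prime, `φ : Γ → G` a homomorphism, `σ` an
automorphism of `Γ`, and `g ∈ G` of `p`-power order with `g⁻¹ φ(γ) g = φ(σ γ)` for all
`γ`.  Then the set of `x ∈ G` of `p`-power order with `x⁻¹ φ(γ) x = φ(σ γ)` for all `γ`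
is exactly the set of `p`-power order elements of the coset `C g`, where
`C = C_G(φ(Γ))`, and its cardinality is divisible by the `p`-part of `|C|`. -/
theorem extensions_are_ppower_elements_of_coset
    (G : Type*) [Group G] [Fintype G] (p : ℕ) (hp : p.Prime)
    (Γ : Type*) [Group Γ] (σ : Γ ≃* Γ) (φ : Γ →* G) (g : G)
    (hgord : ∃ k, orderOf g = p ^ k)
    (hgconj : ∀ γ : Γ, g⁻¹ * φ γ * g = φ (σ γ)) :
    ({x : G | (∃ k, orderOf x = p ^ k) ∧ ∀ γ : Γ, x⁻¹ * φ γ * x = φ (σ γ)} =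
      {x : G | (∃ c ∈ Subgroup.centralizer (Set.range φ), x = c * g) ∧
        ∃ k, orderOf x = p ^ k}) ∧
    p ^ padicValNat p (Nat.card (Subgroup.centralizer (Set.range φ))) ∣
      Nat.card {x : G // (∃ k, orderOf x = p ^ k) ∧ ∀ γ : Γ, x⁻¹ * φ γ * x = φ (σ γ)} := by
  classical
  have hiff := forall_conj_eq_iff_mul_inv_mem_centralizer hgconj
  have hgN : g ∈ normalizer (centralizer (Set.range φ) : Set G) :=
    le_normalizer_of_normal_subgroupOf (centralizer_le_normalizer _)
      (mem_normalizer_range σ.surjective hgconj)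
  refine ⟨?_, ?_⟩
  · ext x
    simp only [Set.mem_ofPred_eq, hiff]
    constructor
    · rintro ⟨hx, hxC⟩
      exact ⟨⟨_, hxC, by group⟩, hx⟩
    · rintro ⟨⟨c, hc, rfl⟩, hx⟩
      exact ⟨hx, by simpa using hc⟩
  · convert pow_padicValNat_card_dvd_card_pElementsOfCoset hp _ g hgN hgord using 1
    rw [Nat.card_eq_fintype_card, Fintype.card_subtype]
    congr 1
    ext x
    simp [hiff, and_comm]
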